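/- arXiv:1705.10599 — 5 statements merged into one kernel-verified Lean document; each statement's English description precedes it below -/
import Mathlib

section
/- Let (M,g) be an n-dimensional Riemannian manifold, n ≥ 3, and f ∈ C^∞(M). Then div(e^{−f} Riem) = 0 (i.e. (M,g,f) ∈ HC_f) if and only if the Bakry–Emery Ricci tensor Ric_f := Ric + ∇²f is a Codazzi tensor, i.e. (Ric_f)_{jt,k} = (Ric_f)_{jk,t} for all indices. -/
/-!
Frame-based formalisation of the classes of canonical Riemannian metrics endowed with a
potential function studied in Catino–Mantegazza–Mazzieri, *Rigidity and non-existence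
results for canonical metrics with potential*.

Following the method of the moving frame used throughout the paper, a smooth (complete)
Riemannian `n`-manifold `(M, g)` is recorded through the components, in a global
orthonormal moving frame `e_1, …, e_n`, of its curvature tensors and of the covariant
derivative operators acting on functions and on vector fields.  In such a frame the
components of the metric are the Kronecker delta `kron`.  The type `M` carries the
Riemannian distance (as a `MetricSpace` instance, so that completeness and compactness of
the manifold are meaningful) and the Riemannian volume measure `vol`.
-/

open scoped BigOperators
open MeasureTheory

noncomputable section

/-- The Kronecker delta `δ_{ij}`: the components of the metric `g` of a Riemannian
manifold in an orthonormal moving frame. -/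
def kron {n : ℕ} (i j : Fin n) : ℝ := if i = j then 1 else 0

/-- The Kulkarni–Nomizu product of two symmetric `2`-tensors, in components:
`(α ⋀ β)_{ijkl} = α_{ik} β_{jl} − α_{il} β_{jk} + α_{jl} β_{ik} − α_{jk} β_{il}`. -/
def kulkarniNomizu {n : ℕ} (α β : Fin n → Fin n → ℝ) (i j k l : Fin n) : ℝ :=
  α i k * β j l - α i l * β j k + α j l * β i k - α j k * β i l

/-- The data, in a global orthonormal moving frame, of a smooth Riemannian `n`-manifold
`(M, g)`:

* `vol` is the Riemannian measure;
* `Riem x i j k l` are the components `R_{ijkl}` of the `(0,4)`-Riemann curvature tensor;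
* `covRiem x i j k l m` are the components `R_{ijkl,m} = ∇_m R_{ijkl}` of its covariant
  derivative;
* `grad φ x i` are the frame components of the gradient `∇φ` of a function `φ`;
* `covD X x i j` are the components `X_{i,j} = ∇_j X_i` of the covariant derivative of the
  vector field with frame components `X`;
* `covD2 X x i j k` are the components `X_{i,jk} = ∇_k ∇_j X_i` of its second covariant
  derivative.

The recorded identities are: the algebraic symmetries of the curvature tensor and of its
covariant derivative, the first and second Bianchi identities, the symmetry of the
Hessian `∇²φ = covD (grad φ)`, the Ricci commutation identity
`X_{i,jk} − X_{i,kj} = X_t R_{tijk}`, the fact that the frame derivative of the scalar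
curvature (a trace of `Riem`) is the corresponding trace of `covRiem`, and the divergence
theorem on a compact manifold. -/
structure RMetric (n : ℕ) (M : Type) [MetricSpace M] [MeasurableSpace M] where
  vol : Measure M
  Riem : M → Fin n → Fin n → Fin n → Fin n → ℝ
  covRiem : M → Fin n → Fin n → Fin n → Fin n → Fin n → ℝ
  grad : (M → ℝ) → M → Fin n → ℝ
  covD : (M → Fin n → ℝ) → M → Fin n → Fin n → ℝ
  covD2 : (M → Fin n → ℝ) → M → Fin n → Fin n → Fin n → ℝ
  riem_antisymm₁ : ∀ x i j k l, Riem x j i k l = - Riem x i j k l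
  riem_antisymm₂ : ∀ x i j k l, Riem x i j l k = - Riem x i j k l
  riem_pairsymm : ∀ x i j k l, Riem x k l i j = Riem x i j k l
  riem_firstBianchi : ∀ x i j k l, Riem x i j k l + Riem x i k l j + Riem x i l j k = 0
  covRiem_antisymm₁ : ∀ x i j k l m, covRiem x j i k l m = - covRiem x i j k l m
  covRiem_antisymm₂ : ∀ x i j k l m, covRiem x i j l k m = - covRiem x i j k l m
  covRiem_pairsymm : ∀ x i j k l m, covRiem x k l i j m = covRiem x i j k l m
  riem_secondBianchi : ∀ x i j k l m,
    covRiem x i j k l m + covRiem x i j l m k + covRiem x i j m k l = 0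
  hessian_symm : ∀ φ x i j, covD (grad φ) x i j = covD (grad φ) x j i
  ricci_identity : ∀ X x i j k,
    covD2 X x i j k - covD2 X x i k j = ∑ t, X x t * Riem x t i j k
  grad_scal_eq : ∀ x m,
    grad (fun y => ∑ i, ∑ j, Riem y i j i j) x m = ∑ i, ∑ j, covRiem x i j i j m
  divergence_theorem : CompactSpace M → ∀ X : M → Fin n → ℝ,
    (∫ x, (∑ i, covD X x i i) ∂vol) = 0

namespace RMetric

variable {n : ℕ} {M : Type} [MetricSpace M] [MeasurableSpace M] (D : RMetric n M)

/-- The Ricci tensor `R_{ik} = δ^{jl} R_{ijkl}`. -/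
def Ric (x : M) (i k : Fin n) : ℝ := ∑ j, D.Riem x i j k j

/-- The covariant derivative `R_{ik,m} = ∇_m R_{ik}` of the Ricci tensor. -/
def covRic (x : M) (i k m : Fin n) : ℝ := ∑ j, D.covRiem x i j k j m

/-- The scalar curvature `R`. -/
def Scal (x : M) : ℝ := ∑ i, D.Ric x i i

/-- The differential `R_m = ∇_m R` of the scalar curvature. -/
def dScal (x : M) (m : Fin n) : ℝ := ∑ i, D.covRic x i i m

/-- The Hessian `φ_{ij} = ∇_j ∇_i φ` of a function. -/
def hess (φ : M → ℝ) (x : M) (i j : Fin n) : ℝ := D.covD (D.grad φ) x i j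

/-- The Laplacian `Δφ` of a function. -/
def lap (φ : M → ℝ) (x : M) : ℝ := ∑ i, D.hess φ x i i

/-- The third covariant derivative `φ_{ijk} = ∇_k ∇_j ∇_i φ` of a function. -/
def d3 (φ : M → ℝ) (x : M) (i j k : Fin n) : ℝ := D.covD2 (D.grad φ) x i j k

/-- The Weyl curvature tensor `W`, from the orthogonal decomposition of `Riem`. -/
def Weyl (x : M) (i j k l : Fin n) : ℝ :=
  D.Riem x i j k l
    - (1 / ((n : ℝ) - 2)) *
        (D.Ric x i k * kron j l - D.Ric x i l * kron j k
          + D.Ric x j l * kron i k - D.Ric x j k * kron i l)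
    + (D.Scal x / (((n : ℝ) - 1) * ((n : ℝ) - 2))) *
        (kron i k * kron j l - kron i l * kron j k)

/-- The covariant derivative `W_{ijkl,m}` of the Weyl tensor. -/
def covWeyl (x : M) (i j k l m : Fin n) : ℝ :=
  D.covRiem x i j k l m
    - (1 / ((n : ℝ) - 2)) *
        (D.covRic x i k m * kron j l - D.covRic x i l m * kron j k
          + D.covRic x j l m * kron i k - D.covRic x j k m * kron i l)
    + (D.dScal x m / (((n : ℝ) - 1) * ((n : ℝ) - 2))) *
        (kron i k * kron j l - kron i l * kron j k)

/-- The Cotton tensor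
`C_{ijk} = R_{ij,k} − R_{ik,j} − (R_k δ_{ij} − R_j δ_{ik})/(2(n−1))`. -/
def Cotton (x : M) (i j k : Fin n) : ℝ :=
  D.covRic x i j k - D.covRic x i k j
    - (1 / (2 * ((n : ℝ) - 1))) * (D.dScal x k * kron i j - D.dScal x j * kron i k)

/-- The Bakry–Émery Ricci tensor `Ric_f = Ric + ∇²f`. -/
def BERic (f : M → ℝ) (x : M) (i j : Fin n) : ℝ := D.Ric x i j + D.hess f x i j

/-- The weighted scalar curvature `R_f = R + Δf`. -/
def ScalF (f : M → ℝ) (x : M) : ℝ := D.Scal x + D.lap f x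

/-- The covariant derivative `(Ric_f)_{ij,m}` of the Bakry–Émery Ricci tensor. -/
def covBERic (f : M → ℝ) (x : M) (i j m : Fin n) : ℝ :=
  D.covRic x i j m + D.d3 f x i j m

/-- The differential `∇_m R_f` of the weighted scalar curvature. -/
def dScalF (f : M → ℝ) (x : M) (m : Fin n) : ℝ :=
  D.dScal x m + ∑ t, D.d3 f x t t m

/-- The `f`-Riemann curvature tensor
`Riem_f = Riem + (∇²f − (Δf/(2(n−1))) g) ⋀ g / (n−2)`. -/
def RiemF (f : M → ℝ) (x : M) (i j k l : Fin n) : ℝ :=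
  D.Riem x i j k l + (1 / ((n : ℝ) - 2)) *
    kulkarniNomizu
      (fun a b => D.hess f x a b - (D.lap f x / (2 * ((n : ℝ) - 1))) * kron a b)
      kron i j k l

/-- The covariant derivative `∇_m (Riem_f)_{ijkl}` of the `f`-Riemann tensor (the metric
being parallel). -/
def covRiemF (f : M → ℝ) (x : M) (i j k l m : Fin n) : ℝ :=
  D.covRiem x i j k l m + (1 / ((n : ℝ) - 2)) *
    kulkarniNomizu
      (fun a b =>
        D.d3 f x a b m - ((∑ t, D.d3 f x t t m) / (2 * ((n : ℝ) - 1))) * kron a b)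
      kron i j k l

/-- The tensor `D^{∇f}` of Cao–Chen. -/
def DTensor (f : M → ℝ) (x : M) (i j k : Fin n) : ℝ :=
  (1 / ((n : ℝ) - 2)) * (D.grad f x k * D.Ric x i j - D.grad f x j * D.Ric x i k)
    + (1 / (((n : ℝ) - 1) * ((n : ℝ) - 2))) *
        (∑ t, D.grad f x t * (D.Ric x t k * kron i j - D.Ric x t j * kron i k))
    - (D.Scal x / (((n : ℝ) - 1) * ((n : ℝ) - 2))) *
        (D.grad f x k * kron i j - D.grad f x j * kron i k)

/-- The `f`-Einstein tensor `E_f = Ric_f − (R_f/2) g`. -/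
def EF (f : M → ℝ) (x : M) (i j : Fin n) : ℝ :=
  D.BERic f x i j - (D.ScalF f x / 2) * kron i j

/-- The covariant derivative `(E_f)_{ij,m}` of the `f`-Einstein tensor. -/
def covEF (f : M → ℝ) (x : M) (i j m : Fin n) : ℝ :=
  D.covBERic f x i j m - (D.dScalF f x m / 2) * kron i j

/-- The divergence (on the first index) of the Kulkarni–Nomizu product `E_f ⋀ g`:
`(E_f ⋀ g)_{tijk,t} = (E_f)_{tj,t} δ_{ik} − (E_f)_{tk,t} δ_{ij} + (E_f)_{ik,j} −
(E_f)_{ij,k}`. -/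
def divEFKN (f : M → ℝ) (x : M) (i j k : Fin n) : ℝ :=
  (∑ t, D.covEF f x t j t) * kron i k - (∑ t, D.covEF f x t k t) * kron i j
    + D.covEF f x i k j - D.covEF f x i j k

/-- The class `HC_f` of `f`-harmonic curvature metrics: `div (e^{−f} Riem) = 0`
(divergence taken on the first index):
`∇_i (e^{−f} R_{ijkl}) = e^{−f} (R_{ijkl,i} − f_i R_{ijkl})`. -/
def IsHCf (f : M → ℝ) : Prop :=
  ∀ x j k l,
    (∑ i, Real.exp (-(f x)) *
        (D.covRiem x i j k l i - D.grad f x i * D.Riem x i j k l)) = 0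

/-- `div (e^{−f} Ric) = 0` (divergence taken on the first index). -/
def IsDivWeightedRicZero (f : M → ℝ) : Prop :=
  ∀ x k,
    (∑ i, Real.exp (-(f x)) * (D.covRic x i k i - D.grad f x i * D.Ric x i k)) = 0

/-- The class `Y_f` of `f`-Yamabe metrics: `∇R = 2 Ric(∇f, ·)`. -/
def IsYf (f : M → ℝ) : Prop :=
  ∀ x k, D.dScal x k = 2 * (∑ t, D.grad f x t * D.Ric x t k)

/-- The class `E_f`: gradient Ricci solitons, `Ric + ∇²f = λ g`. -/
def IsGradRicciSoliton (f : M → ℝ) (lam : ℝ) : Prop :=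
  ∀ x i j, D.BERic f x i j = lam * kron i j

/-- The class `SF_f` of `f`-space forms: `Riem_f = (λ/(2(n−1))) g ⋀ g`. -/
def IsSFf (f : M → ℝ) (lam : ℝ) : Prop :=
  ∀ x i j k l,
    D.RiemF f x i j k l = (lam / (2 * ((n : ℝ) - 1))) * kulkarniNomizu kron kron i j k l

/-- Constant sectional curvature `c`: `Riem = (c/2) g ⋀ g`, i.e.
`R_{ijkl} = c (δ_{ik} δ_{jl} − δ_{il} δ_{jk})`. -/
def HasConstCurv (c : ℝ) : Prop :=
  ∀ x i j k l, D.Riem x i j k l = c * (kron i k * kron j l - kron i l * kron j k)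

/-- `(M,g)` is an Einstein manifold with Einstein constant `mu`: `Ric = mu g`. -/
def IsEinstein (mu : ℝ) : Prop := ∀ x i j, D.Ric x i j = mu * kron i j

/-- `(M,g)` is locally symmetric: `∇ Riem = 0`. -/
def IsLocallySymmetric : Prop := ∀ x i j k l m, D.covRiem x i j k l m = 0

/-- `(M,g)` is locally conformally flat (for `n ≥ 4` this amounts to `W = 0`, for `n = 3`
to `C = 0`; both tensors vanish on any locally conformally flat manifold of dimension
`≥ 3`). -/
def IsLocallyConformallyFlat : Prop :=
  (∀ x i j k l, D.Weyl x i j k l = 0) ∧ ∀ x i j k, D.Cotton x i j k = 0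

/-- Positive sectional curvature: `sec(u,w) > 0` for every orthonormal pair `u, w`. -/
def HasPositiveSectionalCurvature : Prop :=
  ∀ (x : M) (u w : Fin n → ℝ),
    (∑ i, u i ^ 2) = 1 → (∑ i, w i ^ 2) = 1 → (∑ i, u i * w i) = 0 →
      0 < ∑ i, ∑ j, ∑ k, ∑ l, D.Riem x i j k l * u i * w j * u k * w l

/-- Positive curvature operator: the curvature operator on two-forms is positive
definite. -/
def HasPositiveCurvatureOperator : Prop :=
  ∀ (x : M) (ω : Fin n → Fin n → ℝ), (∀ i j, ω j i = - ω i j) → ω ≠ 0 →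
    0 < ∑ i, ∑ j, ∑ k, ∑ l, D.Riem x i j k l * ω i j * ω k l

/-- Nonnegative Ricci curvature. -/
def HasNonnegativeRicci : Prop :=
  ∀ (x : M) (u : Fin n → ℝ), 0 ≤ ∑ i, ∑ j, D.Ric x i j * u i * u j

/-- `X` (given through its frame components) is a conformal vector field on `(M,g)`:
`L_X g = (2 div(X)/n) g`, i.e. `X_{i,j} + X_{j,i} = (2 X_{t,t}/n) δ_{ij}`. -/
def IsConformalVectorField (X : M → Fin n → ℝ) : Prop :=
  ∀ x i j,
    D.covD X x i j + D.covD X x j i = (2 * (∑ t, D.covD X x t t) / (n : ℝ)) * kron i j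

/-- `D'` records the conformal metric `g' = e^{2u} g` on the same manifold `M`, the
`g'`-orthonormal frame being the rescaled frame `e'_i = e^{−u} e_i`: we record the
standard conformal transformation laws of the gradient, of the Ricci tensor and of the
scalar curvature (all components on the left-hand sides being taken in the
`g'`-orthonormal frame, those on the right-hand sides in the `g`-orthonormal frame). -/
def IsConformalTo (D' : RMetric n M) (u : M → ℝ) : Prop :=
  (∀ (φ : M → ℝ) (x : M) (i : Fin n),
      D'.grad φ x i = Real.exp (-(u x)) * D.grad φ x i) ∧
  (∀ (x : M) (i j : Fin n),
      D'.Ric x i j = Real.exp (-(2 * u x)) *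
        (D.Ric x i j - ((n : ℝ) - 2) * (D.hess u x i j - D.grad u x i * D.grad u x j)
          - (D.lap u x + ((n : ℝ) - 2) * (∑ t, (D.grad u x t) ^ 2)) * kron i j)) ∧
  (∀ x : M,
      D'.Scal x = Real.exp (-(2 * u x)) *
        (D.Scal x - 2 * ((n : ℝ) - 1) * D.lap u x
          - ((n : ℝ) - 1) * ((n : ℝ) - 2) * (∑ t, (D.grad u x t) ^ 2)))

/-! ### Nongradient (`X`-) quantities -/

/-- The tensor `Ric_X = Ric + (1/2) L_X g`. -/
def RicX (X : M → Fin n → ℝ) (x : M) (i j : Fin n) : ℝ :=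
  D.Ric x i j + (1 / 2) * (D.covD X x i j + D.covD X x j i)

/-- The covariant derivative `(Ric_X)_{ij,m}`. -/
def covRicX (X : M → Fin n → ℝ) (x : M) (i j m : Fin n) : ℝ :=
  D.covRic x i j m + (1 / 2) * (D.covD2 X x i j m + D.covD2 X x j i m)

/-- `R_X = R + div(X)`. -/
def ScalX (X : M → Fin n → ℝ) (x : M) : ℝ := D.Scal x + ∑ i, D.covD X x i i

/-- The differential `∇_m R_X`. -/
def dScalX (X : M → Fin n → ℝ) (x : M) (m : Fin n) : ℝ :=
  D.dScal x m + ∑ i, D.covD2 X x i i m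

/-- The antisymmetric part `𝒜^X_{ij} = X_{i,j} − X_{j,i}` of `∇X`. -/
def AX (X : M → Fin n → ℝ) (x : M) (i j : Fin n) : ℝ :=
  D.covD X x i j - D.covD X x j i

/-- The covariant derivative `𝒜^X_{ij,m}`. -/
def covAX (X : M → Fin n → ℝ) (x : M) (i j m : Fin n) : ℝ :=
  D.covD2 X x i j m - D.covD2 X x j i m

/-- The divergence `div(𝒜^X)_i = 𝒜^X_{ij,j}`. -/
def divAX (X : M → Fin n → ℝ) (x : M) (i : Fin n) : ℝ := ∑ j, D.covAX X x i j j

/-- The class `Y_X` of `X`-Yamabe metrics: `∇R = 2 Ric(X,·) + div(𝒜^X)`. -/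
def IsYX (X : M → Fin n → ℝ) : Prop :=
  ∀ x i, D.dScal x i = 2 * (∑ t, X x t * D.Ric x t i) + D.divAX X x i

/-- The `X`-Einstein tensor `E_X = Ric_X − (R_X/2) g`, covariant derivative. -/
def covEX (X : M → Fin n → ℝ) (x : M) (i j m : Fin n) : ℝ :=
  D.covRicX X x i j m - (D.dScalX X x m / 2) * kron i j

/-- The divergence (on the first index) of `E_X ⋀ g`. -/
def divEXKN (X : M → Fin n → ℝ) (x : M) (i j k : Fin n) : ℝ :=
  (∑ t, D.covEX X x t j t) * kron i k - (∑ t, D.covEX X x t k t) * kron i j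
    + D.covEX X x i k j - D.covEX X x i j k

/-- The tensor `D^X` (written using the antisymmetric part `𝒜^X` of `∇X`). -/
def DTensorX (X : M → Fin n → ℝ) (x : M) (i j k : Fin n) : ℝ :=
  (1 / ((n : ℝ) - 2)) * (X x k * D.Ric x i j - X x j * D.Ric x i k)
    + (1 / (((n : ℝ) - 1) * ((n : ℝ) - 2))) *
        ((∑ t, X x t * D.Ric x t k) * kron i j - (∑ t, X x t * D.Ric x t j) * kron i k)
    - (D.Scal x / (((n : ℝ) - 1) * ((n : ℝ) - 2))) * (X x k * kron i j - X x j * kron i k)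
    + (1 / 2) * D.covAX X x k j i
    - (1 / (2 * ((n : ℝ) - 1))) *
        ((∑ t, D.covAX X x k t t) * kron i j - (∑ t, D.covAX X x j t t) * kron i k)

/-! ### Four-dimensional quantities -/

/-- The Levi-Civita symbol `ε_{ijkl}` on `Fin 4` (for an oriented orthonormal frame). -/
def eps4 (i j k l : Fin 4) : ℝ :=
  (Int.sign ((((j : ℕ) : ℤ) - ((i : ℕ) : ℤ)) * (((k : ℕ) : ℤ) - ((i : ℕ) : ℤ)) *
      (((l : ℕ) : ℤ) - ((i : ℕ) : ℤ)) * (((k : ℕ) : ℤ) - ((j : ℕ) : ℤ)) *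
      (((l : ℕ) : ℤ) - ((j : ℕ) : ℤ)) * (((l : ℕ) : ℤ) - ((k : ℕ) : ℤ))) : ℝ)

section FourDimensional

variable (E : RMetric 4 M)

/-- The Hodge dual `(⋆W)_{ijkl} = (1/2) ε_{ijab} W_{abkl}` of the Weyl tensor in
dimension four. -/
def starWeyl (x : M) (i j k l : Fin 4) : ℝ :=
  (1 / 2) * ∑ a, ∑ b, eps4 i j a b * E.Weyl x a b k l

/-- The self-dual part `W⁺` of the Weyl tensor of a four-manifold. -/
def weylPlus (x : M) (i j k l : Fin 4) : ℝ :=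
  (1 / 2) * (E.Weyl x i j k l + E.starWeyl x i j k l)

/-- The anti-self-dual part `W⁻` of the Weyl tensor of a four-manifold. -/
def weylMinus (x : M) (i j k l : Fin 4) : ℝ :=
  (1 / 2) * (E.Weyl x i j k l - E.starWeyl x i j k l)

/-- `|W⁺|²`. -/
def normSqWeylPlus (x : M) : ℝ := ∑ i, ∑ j, ∑ k, ∑ l, (E.weylPlus x i j k l) ^ 2

/-- `|W⁻|²`. -/
def normSqWeylMinus (x : M) : ℝ := ∑ i, ∑ j, ∑ k, ∑ l, (E.weylMinus x i j k l) ^ 2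

/-- The signature `τ(M)` of the compact oriented four-manifold `M` is nonzero; by the
Hirzebruch signature formula `48 π² τ(M) = ∫_M |W⁺|² − ∫_M |W⁻|²`, this is recorded as
the inequality of the two integrals. -/
def SignatureNonzero : Prop :=
  (∫ x, E.normSqWeylPlus x ∂E.vol) ≠ ∫ x, E.normSqWeylMinus x ∂E.vol

/-- `(M,g)` is half conformally flat: `W⁺ = 0` or `W⁻ = 0`. -/
def IsHalfConformallyFlat : Prop :=
  (∀ x i j k l, E.weylPlus x i j k l = 0) ∨ ∀ x i j k l, E.weylMinus x i j k l = 0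

/-- The hypothesis that, in harmonic coordinates, the metric `g` and the potential `f`
are real analytic.  In this frame-based formalisation it is recorded through the unique
continuation property that real analyticity provides and through which it is used in the
paper: if the trace-free part of the Bakry–Émery Ricci tensor `Ric_f` vanishes on some
nonempty open subset of `M`, then it vanishes identically. -/
def AnalyticInHarmonicCoordinates (f : M → ℝ) : Prop :=
  ∀ U : Set M, IsOpen U → U.Nonempty →
    (∀ y ∈ U, ∀ i j, E.BERic f y i j = (E.ScalF f y / 4) * kron i j) →
    ∀ (y : M) (i j : Fin 4), E.BERic f y i j = (E.ScalF f y / 4) * kron i j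

/-- `(M,g)` is isometric to `ℂP²` with its canonical (Fubini–Study) metric.  By Hitchin's
classification of compact half conformally flat Einstein four-manifolds (they are `S⁴` or
`ℂP²`, the latter being the non conformally flat one), this is recorded as: `(M,g)` is
Einstein with positive Einstein constant, locally symmetric, simply connected, half
conformally flat and not conformally flat. -/
def IsCanonicalCP2 : Prop :=
  (∃ mu : ℝ, 0 < mu ∧ E.IsEinstein mu) ∧ E.IsLocallySymmetric ∧
    SimplyConnectedSpace M ∧ E.IsHalfConformallyFlat ∧
    ¬ ∀ (x : M) (i j k l : Fin 4), E.Weyl x i j k l = 0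

/-- The universal covering of `(M,g)` is isometric to a `K3` surface with the Calabi–Yau
(Ricci-flat Kähler) metric.  By Hitchin's theorem, a compact half conformally flat
Ricci-flat four-manifold is either flat or has universal cover a `K3` surface with the
Calabi–Yau metric; accordingly this is recorded as: Ricci flat, half conformally flat and
not flat. -/
def UniversalCoverIsK3CalabiYau : Prop :=
  E.IsEinstein 0 ∧ E.IsHalfConformallyFlat ∧
    ¬ ∀ (x : M) (i j k l : Fin 4), E.Riem x i j k l = 0

end FourDimensional

/-! ### Model spaces and structure predicates for the classification results -/

/-- `(M,g,f)` is isometric, up to quotients, to the round sphere `S^n` with `Ric = λ g`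
and constant potential.  For a complete manifold, being a quotient of the round sphere is
equivalent (Killing–Hopf) to having constant sectional curvature `λ/(n−1) > 0`, which is
how it is recorded here. -/
def IsRoundSphereQuotientWithConstantPotential (f : M → ℝ) (lam : ℝ) : Prop :=
  D.HasConstCurv (lam / ((n : ℝ) - 1)) ∧ ∃ c : ℝ, ∀ x, f x = c

/-- `(M,g,f)` is isometric, up to quotients, to the round cylinder
`(ℝ × S^{n−1}, dr² + g_{S^{n−1}})` with Gaussian potential `f = (λ/2) r²`: recorded
through the existence of a unit parallel direction field `v = ∇r` (the `ℝ` direction)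
such that the curvature is that of the round sphere factor (of Einstein constant `λ`) and
the potential is `(λ/2) r²`. -/
def IsRoundCylinderQuotientWithGaussianPotential (f : M → ℝ) (lam : ℝ) : Prop :=
  ∃ (v : M → Fin n → ℝ) (r : M → ℝ),
    (∀ x, (∑ i, v x i ^ 2) = 1) ∧
    (∀ x i j, D.covD v x i j = 0) ∧
    (∀ x i, D.grad r x i = v x i) ∧
    (∀ x i j k l, D.Riem x i j k l = (lam / ((n : ℝ) - 2)) *
        ((kron i k - v x i * v x k) * (kron j l - v x j * v x l) -
          (kron i l - v x i * v x l) * (kron j k - v x j * v x k))) ∧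
    (∀ x, f x = lam / 2 * r x ^ 2)

/-- `(M,g,f)` is isometric, up to quotients, to the Gaussian soliton
`(ℝ^n, g_{ℝ^n}, f = (λ/2)|x|²)`: flat with `∇²f = λ g`. -/
def IsGaussianSolitonQuotient (f : M → ℝ) (lam : ℝ) : Prop :=
  D.HasConstCurv 0 ∧ ∀ x i j, D.hess f x i j = lam * kron i j

/-- `(M,g,f)` is isometric, up to quotients, to flat Euclidean space `(ℝ^n, g_{ℝ^n})`
with constant potential. -/
def IsFlatEuclideanQuotientWithConstantPotential (f : M → ℝ) : Prop :=
  D.HasConstCurv 0 ∧ ∃ c : ℝ, ∀ x, f x = c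

/-- `(M,g,f)` is the Bryant soliton: the unique (up to homotheties) rotationally
symmetric gradient steady Ricci soliton with positive sectional curvature.  Since
rotationally symmetric metrics are locally conformally flat and, conversely (Cao–Chen), a
complete nonflat locally conformally flat gradient steady Ricci soliton with positive
sectional curvature is the Bryant soliton, rotational symmetry is recorded here through
local conformal flatness. -/
def IsBryantSoliton (f : M → ℝ) : Prop :=
  (∀ x i j, D.BERic f x i j = 0) ∧ D.IsLocallyConformallyFlat ∧
    D.HasPositiveSectionalCurvature

/-- Around the point `x`, `(M,g)` is locally a warped product with codimension-one fibers
of constant sectional curvature.  In this frame formalisation this is recorded through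
the characterisation established in the paper: on a neighbourhood of `x` the metric is
locally conformally flat and `∇f` is an eigenvector of the Ricci tensor whose orthogonal
complement is also an eigenspace (so `Ric` has an eigenvalue of multiplicity at least
`n−1`). -/
def IsLocallyWarpedProductWithConstCurvFibersAt (f : M → ℝ) (x : M) : Prop :=
  ∃ U : Set M, IsOpen U ∧ x ∈ U ∧ ∀ y ∈ U,
    (∀ i j k l, D.Weyl y i j k l = 0) ∧ (∀ i j k, D.Cotton y i j k = 0) ∧
    ∃ a b : ℝ, ∀ i j,
      (∑ t, D.grad f y t ^ 2) * D.Ric y i j =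
        b * (∑ t, D.grad f y t ^ 2) * kron i j + (a - b) * (D.grad f y i * D.grad f y j)

/-- `(M,g)` is rotationally symmetric (a global warped product, with spherical fibers, in
the direction of `∇f`): recorded, as above, through local conformal flatness together
with the global eigenvalue structure of the Ricci tensor. -/
def IsRotationallySymmetric (f : M → ℝ) : Prop :=
  D.IsLocallyConformallyFlat ∧ ∀ x : M, ∃ a b : ℝ, ∀ i j,
    (∑ t, D.grad f x t ^ 2) * D.Ric x i j =
      b * (∑ t, D.grad f x t ^ 2) * kron i j + (a - b) * (D.grad f x i * D.grad f x j)

/-- `(M,g,f)` is isometric, up to quotients, to a Riemannian product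
`(ℝ^k × N, g_{ℝ^k} + g_N)` with `f = (λ/2)|x|²_k` depending only on the Euclidean factor
and `N` an `(n−k)`-dimensional locally symmetric Einstein manifold (of Einstein constant
`λ`).  It is recorded through a parallel field `P` of orthogonal projections onto the
flat `ℝ^k` factor. -/
def IsGaussianProductWithLSEFactor (f : M → ℝ) (lam : ℝ) (k : ℕ) : Prop :=
  ∃ P : M → Fin n → Fin n → ℝ,
    (∀ x i j, P x j i = P x i j) ∧
    (∀ x i j, (∑ t, P x i t * P x t j) = P x i j) ∧
    (∀ x, (∑ i, P x i i) = (k : ℝ)) ∧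
    (∀ x i j a b, (∑ t, P x i t * D.Riem x t j a b) = 0) ∧
    (∀ x i j, D.Ric x i j = lam * (kron i j - P x i j)) ∧
    (∀ x i j, D.hess f x i j = lam * P x i j) ∧
    (∀ x i, (∑ t, (kron i t - P x i t) * D.grad f x t) = 0) ∧
    D.IsLocallySymmetric

end RMetric

-- Contracted second Bianchi identity: `∑ᵢ R_{ijkl,i} = R_{jl,k} − R_{jk,l}`.
lemma contracted_bianchi {n : ℕ} {M : Type} [MetricSpace M] [MeasurableSpace M]
    (D : RMetric n M) (x : M) (j k l : Fin n) :
    (∑ i, D.covRiem x i j k l i) = D.covRic x j l k - D.covRic x j k l := by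
  have hsum : ∑ i, (D.covRiem x i j k l i + D.covRiem x i j l i k
      + D.covRiem x i j i k l) = 0 := by
    simp [D.riem_secondBianchi x _ j k l]
  rw [Finset.sum_add_distrib, Finset.sum_add_distrib] at hsum
  have h1 : (∑ i, D.covRiem x i j l i k) = - D.covRic x j l k := by
    unfold RMetric.covRic
    rw [← Finset.sum_neg_distrib]
    exact Finset.sum_congr rfl fun i _ => by
      have a := D.covRiem_antisymm₁ x i j l i k; linarith
  have h2 : (∑ i, D.covRiem x i j i k l) = D.covRic x j k l := by
    unfold RMetric.covRic
    exact Finset.sum_congr rfl fun i _ => by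
      have a1 := D.covRiem_antisymm₁ x i j i k l
      have a2 := D.covRiem_antisymm₂ x j i i k l
      linarith
  rw [h1, h2] at hsum
  linarith

/-- **Lemma 4.1 (a) ⇔ (b).**
Let `(M,g)` be an `n`-dimensional Riemannian manifold, `n ≥ 3`, and `f ∈ C^∞(M)`.  Then
`div(e^{−f} Riem) = 0` (i.e. `(M,g,f) ∈ HC_f`) if and only if the Bakry–Émery Ricci
tensor `Ric_f = Ric + ∇²f` is a Codazzi tensor, i.e.
`(Ric_f)_{jt,k} = (Ric_f)_{jk,t}` for all indices. -/
theorem hcf_iff_bakry_emery_codazzi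
    {n : ℕ} {M : Type} [MetricSpace M] [MeasurableSpace M]
    (hn : 3 ≤ n) (D : RMetric n M) (f : M → ℝ) :
    D.IsHCf f ↔ ∀ x i j k, D.covBERic f x i j k = D.covBERic f x i k j := by
  have hexp : ∀ x : M, Real.exp (-(f x)) ≠ 0 := fun x => Real.exp_ne_zero _
  constructor
  · intro H x i j k
    have h := H x i j k
    rw [← Finset.mul_sum] at h
    have h' : (∑ a, (D.covRiem x a i j k a - D.grad f x a * D.Riem x a i j k)) = 0 :=
      (mul_eq_zero.mp h).resolve_left (hexp x)
    rw [Finset.sum_sub_distrib, contracted_bianchi] at h'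
    have hr := D.ricci_identity (D.grad f) x i j k
    unfold RMetric.covBERic RMetric.d3
    have : (∑ a, D.grad f x a * D.Riem x a i j k)
        = ∑ t, D.grad f x t * D.Riem x t i j k := rfl
    linarith
  · intro H x i j k
    rw [← Finset.mul_sum, mul_eq_zero]
    right
    rw [Finset.sum_sub_distrib, contracted_bianchi]
    have hr := D.ricci_identity (D.grad f) x i j k
    have h := H x i j k
    unfold RMetric.covBERic RMetric.d3 at h
    linarith
end
end

section
/- Let (M,g) be an n-dimensional Riemannian manifold, n ≥ 3, and f ∈ C^∞(M). Then div(e^{−f} Riem) = 0 if and only if the two conditions C_{ijk} + f_t W_{tijk} = D^{∇f}_{ijk} and R_i = 2 f_t R_{ti} hold, where C is the Cotton tensor, W the Weyl tensor, and D^{∇f} is the tensor defined by D^{∇f}_{ijk} = (1/(n−2))(f_k R_{ij} − f_j R_{ik}) + (1/((n−1)(n−2))) f_t (R_{tk} δ_{ij} − R_{tj} δ_{ik}) − (R/((n−1)(n−2)))(f_k δ_{ij} − f_j δ_{ik}). -/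
/-!
Frame-based formalisation of the classes of canonical Riemannian metrics endowed with a
potential function studied in Catino–Mantegazza–Mazzieri, *Rigidity and non-existence
results for canonical metrics with potential*.

Following the method of the moving frame used throughout the paper, a smooth (complete)
Riemannian `n`-manifold `(M, g)` is recorded through the components, in a global
orthonormal moving frame `e_1, …, e_n`, of its curvature tensors and of the covariant
derivative operators acting on functions and on vector fields.  In such a frame the
components of the metric are the Kronecker delta `kron`.  The type `M` carries the
Riemannian distance (as a `MetricSpace` instance, so that completeness and compactness of
the manifold are meaningful) and the Riemannian volume measure `vol`.
-/

open scoped BigOperators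
open MeasureTheory

noncomputable section

section Aux
namespace RMetric
variable {n : ℕ} {M : Type} [MetricSpace M] [MeasurableSpace M] (D : RMetric n M)

lemma aux_sum_kron (g : Fin n → ℝ) (j : Fin n) : (∑ t, g t * kron t j) = g j := by
  simp [kron]

lemma aux_covRic_symm (x : M) (i j m : Fin n) : D.covRic x i j m = D.covRic x j i m := by
  unfold covRic
  exact Finset.sum_congr rfl fun k _ => D.covRiem_pairsymm x j k i k m

lemma aux_ric_symm (x : M) (i k : Fin n) : D.Ric x i k = D.Ric x k i := by
  unfold Ric
  exact Finset.sum_congr rfl fun j _ => D.riem_pairsymm x k j i j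

lemma aux_contracted_bianchi (x : M) (j k l : Fin n) :
    (∑ i, D.covRiem x i j k l i) = D.covRic x j l k - D.covRic x j k l := by
  have h : ∀ i, D.covRiem x i j k l i = D.covRiem x j i l i k - D.covRiem x j i k i l := by
    intro i
    have hb := D.riem_secondBianchi x i j k l i
    have h1 := D.covRiem_antisymm₁ x j i l i k
    have h2 := D.covRiem_antisymm₁ x j i i k l
    have h3 := D.covRiem_antisymm₂ x j i k i l
    linarith
  rw [Finset.sum_congr rfl fun i _ => h i, Finset.sum_sub_distrib]
  rfl

lemma aux_twice_contracted (x : M) (k : Fin n) :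
    (∑ i, D.covRic x i k i) = D.dScal x k / 2 := by
  have h1 : (∑ j, ∑ i, D.covRiem x i j k j i)
      = ∑ j, (D.covRic x j j k - D.covRic x j k j) :=
    Finset.sum_congr rfl fun j _ => D.aux_contracted_bianchi x j k j
  rw [Finset.sum_comm] at h1
  have h2 : (∑ i, ∑ j, D.covRiem x i j k j i) = ∑ i, D.covRic x i k i := rfl
  rw [h2, Finset.sum_sub_distrib] at h1
  have h3 : (∑ j, D.covRic x j j k) = D.dScal x k := rfl
  rw [h3] at h1
  linarith

end RMetric
end Aux
section Aux2
namespace RMetric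
variable {n : ℕ} {M : Type} [MetricSpace M] [MeasurableSpace M] (D : RMetric n M)

lemma aux_weyl_sum (f : M → ℝ) (x : M) (i j k : Fin n) :
    (∑ t, D.grad f x t * D.Weyl x t i j k)
      = (∑ t, D.grad f x t * D.Riem x t i j k)
        - (1 / ((n:ℝ) - 2)) *
            ((∑ t, D.grad f x t * D.Ric x t j) * kron i k
              - (∑ t, D.grad f x t * D.Ric x t k) * kron i j
              + D.Ric x i k * D.grad f x j - D.Ric x i j * D.grad f x k)
        + (D.Scal x / (((n:ℝ)-1) * ((n:ℝ)-2))) *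
            (D.grad f x j * kron i k - D.grad f x k * kron i j) := by
  have e1 : ∀ t, D.grad f x t * D.Weyl x t i j k
      = D.grad f x t * D.Riem x t i j k
        - (1/((n:ℝ)-2)) * (D.grad f x t * D.Ric x t j * kron i k
            - D.grad f x t * D.Ric x t k * kron i j
            + D.Ric x i k * (D.grad f x t * kron t j)
            - D.Ric x i j * (D.grad f x t * kron t k))
        + (D.Scal x / (((n:ℝ)-1)*((n:ℝ)-2))) *
            ((D.grad f x t * kron t j) * kron i k
              - (D.grad f x t * kron t k) * kron i j) := by
    intro t; unfold Weyl; ring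
  rw [Finset.sum_congr rfl fun t _ => e1 t]
  simp only [Finset.sum_add_distrib, Finset.sum_sub_distrib, ← Finset.mul_sum,
    ← Finset.sum_mul, aux_sum_kron]

lemma aux_dtensor_sum (f : M → ℝ) (x : M) (i j k : Fin n) :
    (∑ t, D.grad f x t * (D.Ric x t k * kron i j - D.Ric x t j * kron i k))
      = (∑ t, D.grad f x t * D.Ric x t k) * kron i j
        - (∑ t, D.grad f x t * D.Ric x t j) * kron i k := by
  rw [Finset.sum_mul, Finset.sum_mul, ← Finset.sum_sub_distrib]
  exact Finset.sum_congr rfl fun t _ => by ring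

lemma aux_key (hn : 3 ≤ n) (f : M → ℝ) (x : M) (i j k : Fin n) :
    D.Cotton x i j k + (∑ t, D.grad f x t * D.Weyl x t i j k) - D.DTensor f x i j k
      = -(D.covRic x i k j - D.covRic x i j k - ∑ t, D.grad f x t * D.Riem x t i j k)
        - (1/(2*((n:ℝ)-1))) *
            ((D.dScal x k - 2 * ∑ t, D.grad f x t * D.Ric x t k) * kron i j
              - (D.dScal x j - 2 * ∑ t, D.grad f x t * D.Ric x t j) * kron i k) := by
  have hn3 : (3:ℝ) ≤ (n:ℝ) := by exact_mod_cast hn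
  have h1 : ((n:ℝ) - 1) ≠ 0 := by linarith
  have h2 : ((n:ℝ) - 2) ≠ 0 := by linarith
  rw [aux_weyl_sum]
  unfold Cotton DTensor
  rw [aux_dtensor_sum]
  field_simp
  ring

end RMetric
end Aux2

/-- **Lemma 4.1 (a) ⇔ (c).**
Let `(M,g)` be an `n`-dimensional Riemannian manifold, `n ≥ 3`, and `f ∈ C^∞(M)`.  Then
`div(e^{−f} Riem) = 0` if and only if the two conditions
`C_{ijk} + f_t W_{tijk} = D^{∇f}_{ijk}` and `R_i = 2 f_t R_{ti}` hold, where `C` is the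
Cotton tensor, `W` the Weyl tensor, and `D^{∇f}` the tensor of Cao–Chen. -/
theorem hcf_iff_integrability_conditions
    {n : ℕ} {M : Type} [MetricSpace M] [MeasurableSpace M]
    (hn : 3 ≤ n) (D : RMetric n M) (f : M → ℝ) :
    D.IsHCf f ↔
      ((∀ x i j k,
          D.Cotton x i j k + (∑ t, D.grad f x t * D.Weyl x t i j k) =
            D.DTensor f x i j k) ∧
        ∀ x i, D.dScal x i = 2 * (∑ t, D.grad f x t * D.Ric x t i)) := by
  have core : D.IsHCf f ↔ ∀ x i j k,
      D.covRic x i k j - D.covRic x i j k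
        - (∑ t, D.grad f x t * D.Riem x t i j k) = 0 := by
    unfold RMetric.IsHCf
    constructor
    · intro h x i j k
      have h0 := h x i j k
      rw [← Finset.mul_sum] at h0
      have h1 : (∑ t, (D.covRiem x t i j k t - D.grad f x t * D.Riem x t i j k)) = 0 :=
        by
          rcases mul_eq_zero.mp h0 with h2 | h2
          · exact absurd h2 (Real.exp_ne_zero _)
          · exact h2
      rw [Finset.sum_sub_distrib, D.aux_contracted_bianchi] at h1
      linarith
    · intro h x j k l
      rw [← Finset.mul_sum, Finset.sum_sub_distrib, D.aux_contracted_bianchi]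
      have h1 := h x j k l
      have : D.covRic x j l k - D.covRic x j k l
          - (∑ t, D.grad f x t * D.Riem x t j k l) = 0 := h1
      rw [mul_eq_zero]
      right
      linarith
  rw [core]
  constructor
  · intro h
    have hB : ∀ x k, D.dScal x k = 2 * ∑ t, D.grad f x t * D.Ric x t k := by
      intro x k
      have hs : (∑ j, (D.covRic x j j k - D.covRic x j k j
          - ∑ t, D.grad f x t * D.Riem x t j k j)) = 0 :=
        Finset.sum_eq_zero fun j _ => h x j k j
      rw [Finset.sum_sub_distrib, Finset.sum_sub_distrib] at hs
      have e1 : (∑ j, D.covRic x j j k) = D.dScal x k := rfl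
      have e2 : (∑ j, D.covRic x j k j) = D.dScal x k / 2 := D.aux_twice_contracted x k
      have e3 : (∑ j, ∑ t, D.grad f x t * D.Riem x t j k j)
          = ∑ t, D.grad f x t * D.Ric x t k := by
        rw [Finset.sum_comm]
        exact Finset.sum_congr rfl fun t _ => by
          rw [← Finset.mul_sum]; rfl
      rw [e1, e2, e3] at hs
      linarith
    refine ⟨?_, hB⟩
    intro x i j k
    have hk := D.aux_key hn f x i j k
    have e0 : D.dScal x k - 2 * (∑ t, D.grad f x t * D.Ric x t k) = 0 := by
      rw [hB x k]; ring
    have e0' : D.dScal x j - 2 * (∑ t, D.grad f x t * D.Ric x t j) = 0 := by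
      rw [hB x j]; ring
    rw [h x i j k, e0, e0'] at hk
    simp at hk
    linarith
  · rintro ⟨hA, hB⟩ x i j k
    have hk := D.aux_key hn f x i j k
    have e0 : D.dScal x k - 2 * (∑ t, D.grad f x t * D.Ric x t k) = 0 := by
      rw [hB x k]; ring
    have e0' : D.dScal x j - 2 * (∑ t, D.grad f x t * D.Ric x t j) = 0 := by
      rw [hB x j]; ring
    rw [e0, e0'] at hk
    have hA0 := hA x i j k
    simp at hk
    linarith
end
end

section
/- Let (M,g) be an n-dimensional Riemannian manifold, n ≥ 3, and f ∈ C^∞(M). Then div(e^{−f} Riem) = 0 (i.e. (M,g,f) ∈ HC_f) if and only if div(E_f ⋀ g) = 0, where E_f := Ric_f − (R_f/2) g is the f-Einstein tensor, Ric_f := Ric + ∇²f, R_f := R + Δf, and ⋀ is the Kulkarni–Nomizu product. -/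
/-!
Frame-based formalisation of the classes of canonical Riemannian metrics endowed with a
potential function studied in Catino–Mantegazza–Mazzieri, *Rigidity and non-existence
results for canonical metrics with potential*.

Following the method of the moving frame used throughout the paper, a smooth (complete)
Riemannian `n`-manifold `(M, g)` is recorded through the components, in a global
orthonormal moving frame `e_1, …, e_n`, of its curvature tensors and of the covariant
derivative operators acting on functions and on vector fields.  In such a frame the
components of the metric are the Kronecker delta `kron`.  The type `M` carries the
Riemannian distance (as a `MetricSpace` instance, so that completeness and compactness of
the manifold are meaningful) and the Riemannian volume measure `vol`.
-/

open scoped BigOperators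
open MeasureTheory

noncomputable section

/-! The divergence of `E_f ⋀ g` is the weighted divergence `T = e^{f} div(e^{−f} Riem)`
corrected by its own traces, `T_{ijk} − T_{tjt} δ_{ik} + T_{tkt} δ_{ij}`; this follows from
the contracted Bianchi identities and the Ricci commutation rule for `∇³f`. Tracing in `i, k`
multiplies the trace of `T` by `2 − n`, so for `n ≠ 2` the corrected tensor vanishes exactly
when `T` does. -/

theorem sum_mul_kron {n : ℕ} (c : Fin n → ℝ) (m : Fin n) : ∑ t, c t * kron t m = c m := by
  simp [kron]

theorem forall_sub_trace_mul_kron_eq_zero_iff {n : ℕ} (hn : (n : ℝ) ≠ 2)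
    (T : Fin n → Fin n → Fin n → ℝ) :
    (∀ i j k, T i j k - (∑ t, T t j t) * kron i k + (∑ t, T t k t) * kron i j = 0) ↔
      ∀ i j k, T i j k = 0 := by
  refine ⟨fun h => ?_, fun h i j k => by simp [h]⟩
  have htrace : ∀ m, ∑ t, T t m t = 0 := by
    intro m
    have hsum : ∑ i, (T i m i - (∑ t, T t m t) * kron i i + (∑ t, T t i t) * kron i m) = 0 :=
      Finset.sum_eq_zero fun i _ => h i m i
    simp only [Finset.sum_add_distrib, Finset.sum_sub_distrib, ← Finset.mul_sum,
      sum_mul_kron (fun i => ∑ t, T t i t)] at hsum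
    have hkron : ∑ i : Fin n, kron i i = n := by simp [kron]
    rw [hkron] at hsum
    have : ((2 : ℝ) - n) * ∑ t, T t m t = 0 := by linear_combination hsum
    exact (mul_eq_zero.mp this).resolve_left (sub_ne_zero.mpr hn.symm)
  intro i j k
  simpa [htrace] using h i j k

namespace RMetric

variable {n : ℕ} {M : Type} [MetricSpace M] [MeasurableSpace M] (D : RMetric n M)

theorem sum_covRiem_first (x : M) (j k l : Fin n) :
    ∑ i, D.covRiem x i j k l i = D.covRic x j l k - D.covRic x j k l := by
  simp only [covRic, ← Finset.sum_sub_distrib]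
  refine Finset.sum_congr rfl fun i _ => ?_
  linarith [D.riem_secondBianchi x i j k l i, D.covRiem_antisymm₁ x i j l i k,
    D.covRiem_antisymm₁ x i j i k l, D.covRiem_antisymm₂ x j i i k l]

theorem sum_covRic_first (x : M) (m : Fin n) :
    ∑ t, D.covRic x t m t = D.dScal x m / 2 := by
  have hBianchi : ∑ j, ∑ i, D.covRiem x i j j m i = ∑ t, D.covRic x t m t - D.dScal x m := by
    simp only [sum_covRiem_first, Finset.sum_sub_distrib, dScal]
  have hswap : ∑ j, ∑ i, D.covRiem x i j j m i = -∑ t, D.covRic x t m t := by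
    simp only [covRic, ← Finset.sum_neg_distrib]
    rw [Finset.sum_comm]
    exact Finset.sum_congr rfl fun i _ => Finset.sum_congr rfl fun j _ =>
      D.covRiem_antisymm₂ x i j m j i
  linarith

theorem sum_d3_comm (f : M → ℝ) (x : M) (m : Fin n) :
    ∑ t, D.d3 f x t m t = ∑ t, D.d3 f x t t m + ∑ s, D.grad f x s * D.Ric x s m := by
  have hRicci : ∑ t, (D.d3 f x t m t - D.d3 f x t t m) = ∑ s, D.grad f x s * D.Ric x s m := by
    simp only [d3, D.ricci_identity, Ric, Finset.mul_sum]
    exact Finset.sum_comm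
  rw [Finset.sum_sub_distrib] at hRicci
  linarith

/-- `e^{f} div(e^{−f} Riem)`. -/
def weightedDivRiem (f : M → ℝ) (x : M) (j k l : Fin n) : ℝ :=
  ∑ s, (D.covRiem x s j k l s - D.grad f x s * D.Riem x s j k l)

theorem isHCf_iff (f : M → ℝ) :
    D.IsHCf f ↔ ∀ x j k l, D.weightedDivRiem f x j k l = 0 := by
  simp only [IsHCf, weightedDivRiem, ← Finset.mul_sum, mul_eq_zero, Real.exp_ne_zero, false_or]

theorem sum_weightedDivRiem (f : M → ℝ) (x : M) (m : Fin n) :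
    ∑ t, D.weightedDivRiem f x t m t = D.dScal x m / 2 - ∑ s, D.grad f x s * D.Ric x s m := by
  simp only [weightedDivRiem, Finset.sum_sub_distrib]
  rw [Finset.sum_comm, Finset.sum_comm (f := fun t s => D.grad f x s * D.Riem x s t m t)]
  simp only [← Finset.mul_sum]
  exact congrArg₂ _ (D.sum_covRic_first x m) rfl

theorem sum_covEF_first (f : M → ℝ) (x : M) (m : Fin n) :
    ∑ t, D.covEF f x t m t = (∑ t, D.d3 f x t t m) / 2 + ∑ s, D.grad f x s * D.Ric x s m := by
  simp only [covEF, covBERic, Finset.sum_sub_distrib, Finset.sum_add_distrib]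
  rw [sum_mul_kron (fun t => D.dScalF f x t / 2), sum_covRic_first, sum_d3_comm, dScalF]
  ring

theorem divEFKN_eq (f : M → ℝ) (x : M) (i j k : Fin n) :
    D.divEFKN f x i j k = D.weightedDivRiem f x i j k
      - (∑ t, D.weightedDivRiem f x t j t) * kron i k
      + (∑ t, D.weightedDivRiem f x t k t) * kron i j := by
  rw [divEFKN, sum_covEF_first, sum_covEF_first, sum_weightedDivRiem, sum_weightedDivRiem]
  have hBianchi := D.sum_covRiem_first x i j k
  simp only [weightedDivRiem, Finset.sum_sub_distrib, covEF, covBERic, dScalF, d3]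
  linear_combination -hBianchi - D.ricci_identity (D.grad f) x i j k

end RMetric

/-- **Equivalence (4.4).**
Let `(M,g)` be an `n`-dimensional Riemannian manifold, `n ≥ 3`, and `f ∈ C^∞(M)`.  Then
`div(e^{−f} Riem) = 0` (i.e. `(M,g,f) ∈ HC_f`) if and only if `div(E_f ⋀ g) = 0`, where
`E_f = Ric_f − (R_f/2) g` is the `f`-Einstein tensor, `Ric_f = Ric + ∇²f`,
`R_f = R + Δf`, and `⋀` is the Kulkarni–Nomizu product (divergence on the first index). -/
theorem hcf_iff_div_f_einstein_kulkarni_nomizu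
    {n : ℕ} {M : Type} [MetricSpace M] [MeasurableSpace M]
    (hn : 3 ≤ n) (D : RMetric n M) (f : M → ℝ) :
    D.IsHCf f ↔ ∀ x i j k, D.divEFKN f x i j k = 0 := by
  have hn2 : (n : ℝ) ≠ 2 := by exact_mod_cast (by omega : n ≠ 2)
  simp only [D.isHCf_iff, D.divEFKN_eq,
    forall_sub_trace_mul_kron_eq_zero_iff hn2 (D.weightedDivRiem f _)]
end
end

section
/- Let (M,g) be an n-dimensional Riemannian manifold, n ≥ 3, and f ∈ C^∞(M). Then the following are equivalent: (i) div(e^{−f} Ric) = 0; (ii) ∇R = 2 Ric(∇f, ·); (iii) div(Ric_f − R_f g) = 0, where Ric_f := Ric + ∇²f and R_f := R + Δf. -/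
/-!
Frame-based formalisation of the classes of canonical Riemannian metrics endowed with a
potential function studied in Catino–Mantegazza–Mazzieri, *Rigidity and non-existence
results for canonical metrics with potential*.

Following the method of the moving frame used throughout the paper, a smooth (complete)
Riemannian `n`-manifold `(M, g)` is recorded through the components, in a global
orthonormal moving frame `e_1, …, e_n`, of its curvature tensors and of the covariant
derivative operators acting on functions and on vector fields.  In such a frame the
components of the metric are the Kronecker delta `kron`.  The type `M` carries the
Riemannian distance (as a `MetricSpace` instance, so that completeness and compactness of
the manifold are meaningful) and the Riemannian volume measure `vol`.
-/

open scoped BigOperators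
open MeasureTheory

noncomputable section

namespace RMetric

variable {n : ℕ} {M : Type} [MetricSpace M] [MeasurableSpace M]

lemma covRiem_double_antisymm (D : RMetric n M) (x : M) (i j k l m : Fin n) :
    D.covRiem x j i l k m = D.covRiem x i j k l m := by
  rw [D.covRiem_antisymm₁, D.covRiem_antisymm₂, neg_neg]

lemma contracted_bianchi (D : RMetric n M) (x : M) (k : Fin n) :
    D.dScal x k = 2 * ∑ i, D.covRic x i k i := by
  have hpt : ∀ i j : Fin n, D.covRiem x i j i k j = D.covRiem x j i k i j := by
    intro i j
    calc D.covRiem x i j i k j = D.covRiem x i k i j j := D.covRiem_pairsymm x i k i j j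
      _ = D.covRiem x k i j i j := (D.covRiem_double_antisymm x i k i j j).symm
      _ = D.covRiem x j i k i j := D.covRiem_pairsymm x j i k i j
  have hB : (∑ i, ∑ j, (D.covRiem x i j i k j + D.covRiem x i j k j i
      + D.covRiem x i j j i k)) = 0 :=
    Finset.sum_eq_zero fun i _ => Finset.sum_eq_zero fun j _ =>
      D.riem_secondBianchi x i j i k j
  have h1 : (∑ i, ∑ j, D.covRiem x i j i k j) = ∑ i, ∑ j, D.covRiem x i j k j i := by
    calc (∑ i, ∑ j, D.covRiem x i j i k j)
        = ∑ i, ∑ j, D.covRiem x j i k i j :=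
          Finset.sum_congr rfl fun i _ => Finset.sum_congr rfl fun j _ => hpt i j
      _ = ∑ j, ∑ i, D.covRiem x j i k i j := Finset.sum_comm
      _ = ∑ i, ∑ j, D.covRiem x i j k j i := rfl
  have h3 : (∑ i, ∑ j, D.covRiem x i j j i k)
      = - ∑ i, ∑ j, D.covRiem x i j i j k := by
    rw [← Finset.sum_neg_distrib]
    refine Finset.sum_congr rfl fun i _ => ?_
    rw [← Finset.sum_neg_distrib]
    exact Finset.sum_congr rfl fun j _ => D.covRiem_antisymm₂ x i j i j k
  have hsplit : (∑ i, ∑ j, (D.covRiem x i j i k j + D.covRiem x i j k j i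
      + D.covRiem x i j j i k))
      = (∑ i, ∑ j, D.covRiem x i j i k j) + (∑ i, ∑ j, D.covRiem x i j k j i)
        + ∑ i, ∑ j, D.covRiem x i j j i k := by
    simp [Finset.sum_add_distrib]
  have hdS : D.dScal x k = ∑ i, ∑ j, D.covRiem x i j i j k := rfl
  have hcR : (∑ i, D.covRic x i k i) = ∑ i, ∑ j, D.covRiem x i j k j i := rfl
  rw [hsplit, h1, h3] at hB
  rw [hdS, hcR]
  linarith

end RMetric
/-- **Characterisation of the class `Y_f`.**
Let `(M,g)` be an `n`-dimensional Riemannian manifold, `n ≥ 3`, and `f ∈ C^∞(M)`.  Then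
the following are equivalent:
(i) `div(e^{−f} Ric) = 0`;
(ii) `∇R = 2 Ric(∇f, ·)`;
(iii) `div(Ric_f − R_f g) = 0`, where `Ric_f = Ric + ∇²f` and `R_f = R + Δf`. -/
theorem yf_equivalent_conditions
    {n : ℕ} {M : Type} [MetricSpace M] [MeasurableSpace M]
    (hn : 3 ≤ n) (D : RMetric n M) (f : M → ℝ) :
    (D.IsDivWeightedRicZero f ↔ D.IsYf f) ∧
    (D.IsYf f ↔
      ∀ x k, (∑ i, (D.covBERic f x i k i - D.dScalF f x i * kron i k)) = 0) := by
  have hbi : ∀ x k, D.dScal x k = 2 * ∑ i, D.covRic x i k i :=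
    fun x k => D.contracted_bianchi x k
  have key : ∀ x k, (∑ i, (D.covBERic f x i k i - D.dScalF f x i * kron i k))
      = (∑ t, D.grad f x t * D.Ric x t k) - D.dScal x k / 2 := by
    intro x k
    have hkron : (∑ i, D.dScalF f x i * kron i k) = D.dScalF f x k := by
      simp [kron, mul_ite, Finset.sum_ite_eq']
    have hricci : (∑ i, D.d3 f x i k i) = (∑ i, D.d3 f x i i k)
        + ∑ t, D.grad f x t * D.Ric x t k := by
      have h1 : ∀ i : Fin n, D.d3 f x i k i - D.d3 f x i i k
          = ∑ t, D.grad f x t * D.Riem x t i k i :=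
        fun i => D.ricci_identity (D.grad f) x i k i
      have h2 : (∑ i, (D.d3 f x i k i - D.d3 f x i i k))
          = ∑ t, D.grad f x t * D.Ric x t k := by
        calc (∑ i, (D.d3 f x i k i - D.d3 f x i i k))
            = ∑ i, ∑ t, D.grad f x t * D.Riem x t i k i :=
              Finset.sum_congr rfl fun i _ => h1 i
          _ = ∑ t, ∑ i, D.grad f x t * D.Riem x t i k i := Finset.sum_comm
          _ = ∑ t, D.grad f x t * D.Ric x t k := by
              refine Finset.sum_congr rfl fun t _ => ?_
              rw [← Finset.mul_sum]
              rfl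
      rw [Finset.sum_sub_distrib] at h2
      linarith
    have hsum : (∑ i, D.covBERic f x i k i)
        = (∑ i, D.covRic x i k i) + ∑ i, D.d3 f x i k i := by
      simp [RMetric.covBERic, Finset.sum_add_distrib]
    rw [Finset.sum_sub_distrib, hkron, hsum, hricci]
    have hb := D.contracted_bianchi x k
    simp only [RMetric.dScalF]
    linarith
  constructor
  · constructor
    · intro h x k
      have h0 := h x k
      rw [← Finset.mul_sum] at h0
      have h1 : (∑ i, (D.covRic x i k i - D.grad f x i * D.Ric x i k)) = 0 :=
        (mul_eq_zero.mp h0).resolve_left (Real.exp_ne_zero _)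
      rw [Finset.sum_sub_distrib] at h1
      have hb := hbi x k
      linarith
    · intro h x k
      rw [← Finset.mul_sum]
      have h0 := h x k
      have hb := hbi x k
      have hz : (∑ i, (D.covRic x i k i - D.grad f x i * D.Ric x i k)) = 0 := by
        rw [Finset.sum_sub_distrib]
        linarith
      rw [hz, mul_zero]
  · constructor
    · intro h x k
      rw [key x k]
      have h0 := h x k
      linarith
    · intro h x k
      have h0 := h x k
      rw [key x k] at h0
      linarith
end
end

section
/- Let (M,g) be an n-dimensional Riemannian manifold, n ≥ 3, and f ∈ C^∞(M). Then ∇(Riem_f) = 0 if and only if ∇W = 0 and ∇(Ric_f) = 0, where W is the Weyl tensor, Ric_f := Ric + ∇²f, and Riem_f := Riem + (1/(n−2))(∇²f − (Δf/(2(n−1))) g) ⋀ g. -/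
/-!
Frame-based formalisation of the classes of canonical Riemannian metrics endowed with a
potential function studied in Catino–Mantegazza–Mazzieri, *Rigidity and non-existence
results for canonical metrics with potential*.

Following the method of the moving frame used throughout the paper, a smooth (complete)
Riemannian `n`-manifold `(M, g)` is recorded through the components, in a global
orthonormal moving frame `e_1, …, e_n`, of its curvature tensors and of the covariant
derivative operators acting on functions and on vector fields.  In such a frame the
components of the metric are the Kronecker delta `kron`.  The type `M` carries the
Riemannian distance (as a `MetricSpace` instance, so that completeness and compactness of
the manifold are meaningful) and the Riemannian volume measure `vol`.
-/

open scoped BigOperators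
open MeasureTheory

noncomputable section

namespace RMetric

variable {n : ℕ} {M : Type} [MetricSpace M] [MeasurableSpace M] (D : RMetric n M)

lemma aux_dScalF_eq_trace (f : M → ℝ) (x : M) (m : Fin n) :
    D.dScalF f x m = ∑ t, D.covBERic f x t t m := by
  simp [dScalF, dScal, covBERic, Finset.sum_add_distrib]

lemma aux_decomp (hn : 3 ≤ n) (f : M → ℝ) (x : M) (i j k l m : Fin n) :
    D.covRiemF f x i j k l m = D.covWeyl x i j k l m + (1 / ((n : ℝ) - 2)) *
      kulkarniNomizu
        (fun a b =>
          D.covBERic f x a b m - (D.dScalF f x m / (2 * ((n : ℝ) - 1))) * kron a b)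
        kron i j k l := by
  have h1 : ((n : ℝ) - 1) ≠ 0 := by
    have : (3 : ℝ) ≤ (n : ℝ) := by exact_mod_cast hn
    nlinarith
  have h2 : ((n : ℝ) - 2) ≠ 0 := by
    have : (3 : ℝ) ≤ (n : ℝ) := by exact_mod_cast hn
    nlinarith
  simp only [covRiemF, covWeyl, covBERic, dScalF, kulkarniNomizu]
  field_simp
  ring

lemma aux_trace (hn : 3 ≤ n) (f : M → ℝ) (x : M) (i k m : Fin n)
    (h : ∀ j, D.covRiemF f x i j k j m = 0) :
    D.covBERic f x i k m = 0 := by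
  have h1 : ((n : ℝ) - 1) ≠ 0 := by
    have : (3 : ℝ) ≤ (n : ℝ) := by exact_mod_cast hn
    nlinarith
  have h2 : ((n : ℝ) - 2) ≠ 0 := by
    have : (3 : ℝ) ≤ (n : ℝ) := by exact_mod_cast hn
    nlinarith
  have hsum : ∑ j : Fin n, D.covRiemF f x i j k j m = D.covBERic f x i k m := by
    simp only [covRiemF, covBERic, covRic, kulkarniNomizu, kron]
    simp only [mul_ite, mul_one, mul_zero, ite_mul, one_mul, zero_mul,
      Finset.sum_add_distrib, Finset.sum_sub_distrib, Finset.sum_ite_eq,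
      Finset.sum_ite_eq', Finset.mem_univ, if_true, Finset.sum_const,
      Finset.card_univ, Fintype.card_fin, nsmul_eq_mul, ← Finset.mul_sum,
      ← Finset.sum_mul]
    rcases eq_or_ne i k with hik | hik <;>
      simp only [hik, if_true, if_neg, ne_eq, not_false_iff,
        Finset.sum_add_distrib, Finset.sum_sub_distrib, ← Finset.mul_sum,
        ← Finset.sum_mul, Finset.sum_const, Finset.card_univ, Fintype.card_fin,
        nsmul_eq_mul] <;>
      field_simp <;> ring
  rw [← hsum]
  simp [h]

end RMetric

/-- **Equivalence (4.2).**
Let `(M,g)` be an `n`-dimensional Riemannian manifold, `n ≥ 3`, and `f ∈ C^∞(M)`.  Then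
`∇(Riem_f) = 0` if and only if `∇W = 0` and `∇(Ric_f) = 0`, where `W` is the Weyl tensor
and `Ric_f = Ric + ∇²f`. -/
theorem covRiemF_zero_iff_covWeyl_covBERic_zero
    {n : ℕ} {M : Type} [MetricSpace M] [MeasurableSpace M]
    (hn : 3 ≤ n) (D : RMetric n M) (f : M → ℝ) :
    (∀ x i j k l m, D.covRiemF f x i j k l m = 0) ↔
      ((∀ x i j k l m, D.covWeyl x i j k l m = 0) ∧
        ∀ x i j m, D.covBERic f x i j m = 0) := by
  constructor
  · intro h
    have hB : ∀ x i j m, D.covBERic f x i j m = 0 := fun x i j m =>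
      D.aux_trace hn f x i j m (fun t => h x i t j t m)
    refine ⟨fun x i j k l m => ?_, hB⟩
    have hd := D.aux_decomp hn f x i j k l m
    rw [h x i j k l m] at hd
    have hS : D.dScalF f x m = 0 := by
      rw [D.aux_dScalF_eq_trace f x m]
      simp [hB]
    simp only [hB, hS, kulkarniNomizu, zero_sub, zero_mul, mul_zero, zero_div,
      neg_zero, sub_zero, add_zero, zero_add, sub_self] at hd
    linarith [hd]
  · rintro ⟨hW, hB⟩ x i j k l m
    have hS : D.dScalF f x m = 0 := by
      rw [D.aux_dScalF_eq_trace f x m]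
      simp [hB]
    rw [D.aux_decomp hn f x i j k l m, hW x i j k l m, hS]
    simp [kulkarniNomizu, hB]
end
end
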